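/- arXiv:2302.10870 — 4 statements merged into one kernel-verified Lean document; each statement's English description precedes it below -/
import Mathlib

section
/- Let q₁, q₂ be probability distributions on Y with TV(q₁,q₂) < 1 and let p(y) = min{q₁(y),q₂(y)}/(1−TV(q₁,q₂)). Then for each i ∈ {1,2}, TV(p, qᵢ) ≤ TV(q₁, q₂). -/
theorem stmt_6_aux {Y : Type*} [Countable Y] (q₁ q₂ : Y → ℝ) (TV : ℝ)
    (hq₁0 : ∀ y, 0 ≤ q₁ y) (hq₂0 : ∀ y, 0 ≤ q₂ y)
    (hq₁1 : HasSum q₁ 1) (hq₂1 : HasSum q₂ 1)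
    (hTVdef : TV = (1 / 2) * ∑' y, |q₁ y - q₂ y|) (hTV : TV < 1)
    (p : Y → ℝ) (hpdef : ∀ y, p y = min (q₁ y) (q₂ y) / (1 - TV)) :
    (1 / 2) * ∑' y, |p y - q₁ y| ≤ TV := by
  have hs1 := hq₁1.summable
  have hs2 := hq₂1.summable
  have habs : Summable (fun y => |q₁ y - q₂ y|) := by
    apply Summable.of_nonneg_of_le (fun y => abs_nonneg _) (fun y => ?_) (hs1.add hs2)
    calc |q₁ y - q₂ y| ≤ |q₁ y| + |q₂ y| := abs_sub _ _
      _ = q₁ y + q₂ y := by rw [abs_of_nonneg (hq₁0 y), abs_of_nonneg (hq₂0 y)]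
  have hTV0 : 0 ≤ TV := by
    rw [hTVdef]
    exact mul_nonneg (by norm_num) (tsum_nonneg fun y => abs_nonneg _)
  have hspos : 0 < 1 - TV := by linarith
  have habs2 : HasSum (fun y => |q₁ y - q₂ y|) (2 * TV) := by
    have h : ∑' y, |q₁ y - q₂ y| = 2 * TV := by rw [hTVdef]; ring
    exact h ▸ habs.hasSum
  have hmin : HasSum (fun y => min (q₁ y) (q₂ y)) (1 - TV) := by
    have hfun : (fun y => min (q₁ y) (q₂ y))
        = fun y => (q₁ y + q₂ y - |q₁ y - q₂ y|) / 2 := by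
      funext y; rcases le_total (q₁ y) (q₂ y) with h | h
      · rw [min_eq_left h, abs_of_nonpos (by linarith)]; ring
      · rw [min_eq_right h, abs_of_nonneg (by linarith)]; ring
    rw [hfun]
    have h2 : (1 - TV) = (1 + 1 - 2 * TV) / 2 := by ring
    rw [h2]
    exact ((hq₁1.add hq₂1).sub habs2).div_const 2
  set g : Y → ℝ := fun y =>
    min (q₁ y) (q₂ y) * (TV / (1 - TV)) + (q₁ y - min (q₁ y) (q₂ y)) with hgdef
  have hg : HasSum g (2 * TV) := by
    have h := (hmin.mul_right (TV / (1 - TV))).add (hq₁1.sub hmin)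
    have : (1 - TV) * (TV / (1 - TV)) + (1 - (1 - TV)) = 2 * TV := by
      field_simp
      ring
    rwa [this] at h
  have hle : ∀ y, |p y - q₁ y| ≤ g y := by
    intro y
    set m := min (q₁ y) (q₂ y) with hm
    have hm0 : 0 ≤ m := le_min (hq₁0 y) (hq₂0 y)
    have hmq : m ≤ q₁ y := min_le_left _ _
    have h1 : |p y - q₁ y| ≤ |p y - m| + |m - q₁ y| := abs_sub_le _ _ _
    have h2 : p y - m = m * (TV / (1 - TV)) := by
      rw [hpdef y, ← hm]
      field_simp
      ring
    have h3 : |p y - m| = m * (TV / (1 - TV)) := by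
      rw [h2, abs_of_nonneg]
      positivity
    have h4 : |m - q₁ y| = q₁ y - m := by
      rw [abs_of_nonpos (by linarith)]; ring
    calc |p y - q₁ y| ≤ |p y - m| + |m - q₁ y| := h1
      _ = m * (TV / (1 - TV)) + (q₁ y - m) := by rw [h3, h4]
      _ = g y := rfl
  have hsum : Summable (fun y => |p y - q₁ y|) :=
    Summable.of_nonneg_of_le (fun y => abs_nonneg _) hle hg.summable
  have htsum : ∑' y, |p y - q₁ y| ≤ 2 * TV := by
    calc ∑' y, |p y - q₁ y| ≤ ∑' y, g y := Summable.tsum_le_tsum hle hsum hg.summable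
      _ = 2 * TV := hg.tsum_eq
  linarith

theorem stmt_6 {Y : Type*} [Countable Y] (q₁ q₂ : Y → ℝ) (TV : ℝ)
    (hq₁0 : ∀ y, 0 ≤ q₁ y) (hq₂0 : ∀ y, 0 ≤ q₂ y)
    (hq₁1 : HasSum q₁ 1) (hq₂1 : HasSum q₂ 1)
    (hTVdef : TV = (1 / 2) * ∑' y, |q₁ y - q₂ y|) (hTV : TV < 1)
    (p : Y → ℝ) (hpdef : ∀ y, p y = min (q₁ y) (q₂ y) / (1 - TV)) :
    (1 / 2) * ∑' y, |p y - q₁ y| ≤ TV ∧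
    (1 / 2) * ∑' y, |p y - q₂ y| ≤ TV := by
  constructor
  · exact stmt_6_aux q₁ q₂ TV hq₁0 hq₂0 hq₁1 hq₂1 hTVdef hTV p hpdef
  · apply stmt_6_aux q₂ q₁ TV hq₂0 hq₁0 hq₂1 hq₁1 _ hTV p
    · intro y; rw [hpdef y, min_comm]
    · simpa [abs_sub_comm] using hTVdef
end

section
/- Let p, q₁,…,q_n be probability distributions on Y, d = ∑_y max{p(y) − minᵢ qᵢ(y), 0} with d < 1, and k = log₂(2/(1−d)). Let ν = ∑_y p(y)·𝟙[p(y) ≤ 2^k minᵢ qᵢ(y)]. Then ν ≥ (1−d)/(1+d). -/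
theorem stmt_11 {Y : Type*} [Countable Y] {n : ℕ} (hn : 0 < n)
    (p : Y → ℝ) (q : Fin n → Y → ℝ) (d k ν : ℝ)
    (hp0 : ∀ y, 0 ≤ p y) (hq0 : ∀ i y, 0 ≤ q i y)
    (hp1 : HasSum p 1) (hq1 : ∀ i, HasSum (q i) 1)
    (hddef : d = ∑' y, max (p y - ⨅ i, q i y) 0) (hd : d < 1)
    (hkdef : k = Real.logb 2 (2 / (1 - d)))
    (hνdef : ν = ∑' y, ({y : Y | p y ≤ 2 ^ k * ⨅ i, q i y}).indicator p y) :
    (1 - d) / (1 + d) ≤ ν := by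
  have hps : Summable p := hp1.summable
  have hne : Nonempty (Fin n) := Fin.pos_iff_nonempty.mp hn
  set m : Y → ℝ := fun y => ⨅ i, q i y with hm
  have hm0 : ∀ y, 0 ≤ m y := fun y => le_ciInf (fun i => hq0 i y)
  have hd0 : 0 ≤ d := hddef ▸ tsum_nonneg (fun y => le_max_right _ _)
  have h1d : 0 < 1 - d := by linarith
  have hc : (2:ℝ) ^ k = 2 / (1 - d) := by
    rw [hkdef]
    exact Real.rpow_logb (by norm_num) (by norm_num) (by positivity)
  set A := {y : Y | p y ≤ 2 ^ k * m y} with hA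
  have hiA : Summable (A.indicator p) := hps.indicator A
  have hiAc : Summable (Aᶜ.indicator p) := hps.indicator Aᶜ
  have hsplit : ν + ∑' y, Aᶜ.indicator p y = 1 := by
    rw [hνdef, ← Summable.tsum_add hiA hiAc, ← hp1.tsum_eq]
    congr 1
    ext y
    by_cases h : y ∈ A <;> simp [Set.indicator_apply, h]
  set g : Y → ℝ := fun y => max (p y - m y) 0 with hg
  have hgs : Summable g := by
    apply Summable.of_nonneg_of_le (fun y => le_max_right _ _) _ hps
    intro y
    have := hm0 y
    have := hp0 y
    simp only [hg, max_le_iff]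
    constructor <;> linarith
  have hkey : ∀ y, ((1 + d)/2) * Aᶜ.indicator p y ≤ g y := by
    intro y
    by_cases h : y ∈ A
    · simp [Set.indicator_apply, h, hg, le_max_iff]
    · have h' : 2 ^ k * m y < p y := by
        simp only [hA, Set.mem_setOf_eq, not_le] at h
        exact h
      rw [hc] at h'
      have hmle : m y ≤ (1 - d)/2 * p y := by
        have := hm0 y
        rw [div_mul_eq_mul_div, div_lt_iff₀ h1d] at h'
        nlinarith
      simp only [Set.indicator_of_mem (Set.mem_compl h)]
      have : (1 + d)/2 * p y ≤ p y - m y := by linarith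
      exact this.trans (le_max_left _ _)
  have hsum : ((1 + d)/2) * (∑' y, Aᶜ.indicator p y) ≤ d := by
    have h2 := Summable.tsum_le_tsum hkey (hiAc.mul_left _) hgs
    rw [tsum_mul_left, ← hddef] at h2
    exact h2
  have hEν : ∑' y, Aᶜ.indicator p y = 1 - ν := by linarith
  rw [hEν] at hsum
  rw [div_le_iff₀ (by linarith : (0:ℝ) < 1 + d)]
  nlinarith
end

section
/- Let q be a probability distribution on a countable set Y, let C₁ ≠ C₂ ∈ Y with q(C₁) = q(C₂) = 0, and define qᵢ(y) = (1/2)·𝟙[y = Cᵢ] + (1/2)·q(y) for i ∈ {1,2}. Then the distribution proportional to min{q₁, q₂} equals q, the distribution proportional to √(q₁q₂) equals q, TV(q₁,q₂) = 1/2, H²(q₁,q₂) = 1/2, and for every y in supp(q) and i ∈ {1,2}, q(y)/qᵢ(y) = 2. -/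
theorem stmt_16 {Y : Type*} [Countable Y] [DecidableEq Y] (q : Y → ℝ) (C₁ C₂ : Y)
    (hq0 : ∀ y, 0 ≤ q y) (hq1 : HasSum q 1)
    (hC : C₁ ≠ C₂) (hqC₁ : q C₁ = 0) (hqC₂ : q C₂ = 0)
    (q₁ q₂ : Y → ℝ)
    (hq₁def : ∀ y, q₁ y = (1 / 2) * (if y = C₁ then 1 else 0) + (1 / 2) * q y)
    (hq₂def : ∀ y, q₂ y = (1 / 2) * (if y = C₂ then 1 else 0) + (1 / 2) * q y) :
    (∀ y, min (q₁ y) (q₂ y) / (∑' z, min (q₁ z) (q₂ z)) = q y) ∧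
    (∀ y, Real.sqrt (q₁ y * q₂ y) / (∑' z, Real.sqrt (q₁ z * q₂ z)) = q y) ∧
    ((1 / 2) * ∑' y, |q₁ y - q₂ y| = 1 / 2) ∧
    (1 - ∑' y, Real.sqrt (q₁ y * q₂ y) = 1 / 2) ∧
    (∀ y, q y ≠ 0 → q y / q₁ y = 2 ∧ q y / q₂ y = 2) := by
  have hmin : ∀ y, min (q₁ y) (q₂ y) = q y / 2 := by
    intro y
    rw [hq₁def, hq₂def]
    by_cases h1 : y = C₁
    · subst h1
      simp [hC, hqC₁]
    · by_cases h2 : y = C₂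
      · subst h2
        simp [hC.symm, hqC₂, min_comm]
      · simp [h1, h2]; ring
  have hsqrt : ∀ y, Real.sqrt (q₁ y * q₂ y) = q y / 2 := by
    intro y
    rw [hq₁def, hq₂def]
    by_cases h1 : y = C₁
    · subst h1
      simp [hC, hqC₁]
    · by_cases h2 : y = C₂
      · subst h2
        simp [hC.symm, hqC₂]
      · simp only [h1, h2, if_false, mul_zero, zero_add]
        rw [show 1 / 2 * q y * (1 / 2 * q y) = (q y / 2) ^ 2 by ring]
        exact Real.sqrt_sq (div_nonneg (hq0 y) (by norm_num))
  have hsum2 : HasSum (fun y => q y / 2) (1 / 2) := hq1.div_const 2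
  have ht2 : (∑' y, q y / 2) = 1 / 2 := hsum2.tsum_eq
  refine ⟨?_, ?_, ?_, ?_, ?_⟩
  · intro y
    simp only [hmin, ht2]
    ring
  · intro y
    simp only [hsqrt, ht2]
    ring
  · have habs : ∀ y, |q₁ y - q₂ y| =
        (if y = C₁ then (1:ℝ)/2 else 0) + (if y = C₂ then (1:ℝ)/2 else 0) := by
      intro y
      rw [hq₁def, hq₂def]
      by_cases h1 : y = C₁
      · subst h1; simp [hC]
      · by_cases h2 : y = C₂
        · subst h2; simp [hC.symm, abs_of_nonpos]
        · simp [h1, h2]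
    have hs : HasSum (fun y => |q₁ y - q₂ y|) 1 := by
      have := (hasSum_ite_eq C₁ ((1:ℝ)/2)).add (hasSum_ite_eq C₂ ((1:ℝ)/2))
      rw [show (1:ℝ)/2 + 1/2 = 1 by norm_num] at this
      exact this.congr_fun fun y => (habs y)
    rw [hs.tsum_eq]; norm_num
  · have : HasSum (fun y => Real.sqrt (q₁ y * q₂ y)) (1/2) :=
      hsum2.congr_fun fun y => (hsqrt y)
    rw [this.tsum_eq]; norm_num
  · intro y hy
    have h1 : y ≠ C₁ := fun h => hy (h ▸ hqC₁)
    have h2 : y ≠ C₂ := fun h => hy (h ▸ hqC₂)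
    constructor
    · rw [hq₁def]; simp [h1]; field_simp
    · rw [hq₂def]; simp [h2]; field_simp
end

section
/- Let p, q₁,…,q_n be probability distributions on Y with d = ∑_y max{p(y) − minᵢ qᵢ(y), 0} < 1, k ≥ log₂(2/(1−d)), acceptance set A = {y : p(y) ≤ 2^k minᵢ qᵢ(y)}, ν = p(A) > 0 and p_k(y) = p(y)𝟙[y∈A]/ν. Then for every event E ⊆ Y and every i, p_k(E) ≤ (2^k/ν)·qᵢ(E) ≤ 2^k·(1+d)/(1−d)·qᵢ(E). -/
theorem stmt_19 {Y : Type*} [Countable Y] {n : ℕ} (hn : 0 < n)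
    (p : Y → ℝ) (q : Fin n → Y → ℝ) (d k ν : ℝ)
    (hp0 : ∀ y, 0 ≤ p y) (hq0 : ∀ i y, 0 ≤ q i y)
    (hp1 : HasSum p 1) (hq1 : ∀ i, HasSum (q i) 1)
    (hddef : d = ∑' y, max (p y - ⨅ i, q i y) 0) (hd : d < 1)
    (hk : Real.logb 2 (2 / (1 - d)) ≤ k)
    (A : Set Y) (hAdef : A = {y : Y | p y ≤ 2 ^ k * ⨅ i, q i y})
    (hνdef : ν = ∑' y : A, p y) (hν : 0 < ν)
    (pk : Y → ℝ) (hpkdef : ∀ y, pk y = A.indicator p y / ν) :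
    ∀ (E : Set Y) (i : Fin n),
      (∑' y : E, pk y ≤ (2 ^ k / ν) * ∑' y : E, q i y) ∧
      ((2 ^ k / ν) * ∑' y : E, q i y ≤
        2 ^ k * (1 + d) / (1 - d) * ∑' y : E, q i y) := by
  have hne : Nonempty (Fin n) := ⟨⟨0, hn⟩⟩
  set m : Y → ℝ := fun y => ⨅ i, q i y with hm
  have hm0 : ∀ y, 0 ≤ m y := fun y =>
    le_ciInf (fun i => hq0 i y)
  have hmle : ∀ i y, m y ≤ q i y := fun i y =>
    ciInf_le ⟨0, by rintro x ⟨j, rfl⟩; exact hq0 j y⟩ i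
  have hps : Summable p := hp1.summable
  have hqs : ∀ i, Summable (q i) := fun i => (hq1 i).summable
  have hms : Summable m := hqs ⟨0, hn⟩ |>.of_nonneg_of_le hm0 (hmle _)
  have hmaxs : Summable (fun y => max (p y - m y) 0) :=
    hps.of_nonneg_of_le (fun y => le_max_right _ _)
      (fun y => max_le (by linarith [hm0 y]) (hp0 y))
  have hd0 : 0 ≤ d := hddef ▸ tsum_nonneg (fun y => le_max_right _ _)
  have h1d : 0 < 1 - d := by linarith
  have h1d' : 0 < 1 + d := by linarith
  -- 2^k ≥ 2/(1-d)
  have h2k : 2 / (1 - d) ≤ (2 : ℝ) ^ k := by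
    have hpos : 0 < 2 / (1 - d) := by positivity
    calc 2 / (1 - d) = (2 : ℝ) ^ Real.logb 2 (2 / (1 - d)) :=
          (Real.rpow_logb (by norm_num) (by norm_num) hpos).symm
      _ ≤ (2 : ℝ) ^ k := Real.rpow_le_rpow_left_iff (by norm_num) |>.2 hk
  have h2kpos : (0 : ℝ) < (2 : ℝ) ^ k := Real.rpow_pos_of_pos (by norm_num) k
  -- on Aᶜ : m y ≤ (1-d)/2 * p y
  have hAc : ∀ y ∉ A, m y ≤ (1 - d) / 2 * p y := by
    intro y hy
    rw [hAdef] at hy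
    simp only [Set.mem_setOf_eq, not_le] at hy
    have h1 : (2 : ℝ) ^ k * m y < p y := hy
    have h2 : 2 / (1 - d) * m y ≤ (2 : ℝ) ^ k * m y :=
      mul_le_mul_of_nonneg_right h2k (hm0 y)
    have h3 := h2.trans h1.le
    rw [div_mul_eq_mul_div, div_le_iff₀ h1d] at h3
    nlinarith
  -- ν ≥ (1-d)/(1+d)
  set c : ℝ := ∑' y : ↥Aᶜ, p y with hc
  have hνc : ν + c = 1 := by
    rw [hνdef, hc]
    exact (Summable.tsum_add_tsum_compl (hps.subtype A) (hps.subtype Aᶜ)).trans hp1.tsum_eq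
  have hcle : c ≤ d + (1 - d) / 2 * c := by
    have hstep : ∀ y : ↥Aᶜ, p y.1 ≤ max (p y.1 - m y.1) 0 + (1 - d) / 2 * p y.1 := by
      intro ⟨y, hy⟩
      have := hAc y hy
      have := le_max_left (p y - m y) 0
      simp only []
      linarith
    have hs1 : Summable (fun y : ↥Aᶜ => max (p y.1 - m y.1) 0) := hmaxs.subtype _
    have hs2 : Summable (fun y : ↥Aᶜ => (1 - d) / 2 * p y.1) :=
      (hps.subtype Aᶜ).mul_left _
    calc c ≤ ∑' y : ↥Aᶜ, (max (p y.1 - m y.1) 0 + (1 - d) / 2 * p y.1) :=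
          Summable.tsum_le_tsum hstep (hps.subtype Aᶜ) (hs1.add hs2)
      _ = (∑' y : ↥Aᶜ, max (p y.1 - m y.1) 0) + ∑' y : ↥Aᶜ, (1 - d) / 2 * p y.1 :=
          Summable.tsum_add hs1 hs2
      _ ≤ d + (1 - d) / 2 * c := by
          gcongr
          · rw [hddef]
            exact Summable.tsum_subtype_le _ _ (fun y => le_max_right _ _) hmaxs
          · rw [tsum_mul_left]
  have hνlb : (1 - d) / (1 + d) ≤ ν := by
    have hc2 : c * (1 + d) ≤ 2 * d := by nlinarith
    rw [div_le_iff₀ h1d']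
    nlinarith
  -- now the main statement
  intro E i
  have hqE0 : 0 ≤ ∑' y : E, q i y :=
    tsum_nonneg (fun y => hq0 i y.1)
  constructor
  · -- termwise
    have hterm : ∀ y : E, pk y.1 ≤ (2 ^ k / ν) * q i y.1 := by
      intro ⟨y, hy⟩
      rw [hpkdef]
      simp only []
      by_cases hyA : y ∈ A
      · rw [Set.indicator_of_mem hyA]
        have hpy : p y ≤ 2 ^ k * m y := by rw [hAdef] at hyA; exact hyA
        have hle : p y ≤ 2 ^ k * q i y :=
          hpy.trans (mul_le_mul_of_nonneg_left (hmle i y) h2kpos.le)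
        rw [div_mul_eq_mul_div]
        exact div_le_div_of_nonneg_right hle hν.le
      · rw [Set.indicator_of_notMem hyA, zero_div]
        exact mul_nonneg (div_nonneg h2kpos.le hν.le) (hq0 i y)
    have hspk : Summable (fun y : E => pk y.1) := by
      have : Summable pk := by
        have : Summable (fun y => A.indicator p y / ν) :=
          (hps.indicator A).div_const ν
        exact this.congr (fun y => (hpkdef y).symm)
      exact this.subtype E
    have hsq : Summable (fun y : E => (2 ^ k / ν) * q i y.1) :=
      ((hqs i).subtype E).mul_left _
    calc ∑' y : E, pk y.1 ≤ ∑' y : E, (2 ^ k / ν) * q i y.1 :=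
          Summable.tsum_le_tsum hterm hspk hsq
      _ = (2 ^ k / ν) * ∑' y : E, q i y.1 := tsum_mul_left
  · have h1ν : 2 ^ k / ν ≤ 2 ^ k * (1 + d) / (1 - d) := by
      rw [div_le_div_iff₀ hν h1d]
      have : (1 - d) / (1 + d) * (1 + d) ≤ ν * (1 + d) :=
        mul_le_mul_of_nonneg_right hνlb h1d'.le
      rw [div_mul_cancel₀ _ (ne_of_gt h1d')] at this
      nlinarith [h2kpos]
    exact mul_le_mul_of_nonneg_right h1ν hqE0
end
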